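/- arXiv:1909.08417 — 2 statements merged into one kernel-verified Lean document; each statement's English description precedes it below -/
import Mathlib

section
/- With the same setup (finite diagrams with matched points P_l^{(1)}, P_l^{(2)} = b(P_l^{(1)}), eminence z_l^{(i)} = M f(y_l^{(i)} − x_l^{(i)}) with f K-Lipschitz), for every 1 ≤ p < ∞ there is a constant C depending only on p, M, K such that ‖Z⁽²⁾ − Z⁽¹⁾‖_p ≤ C · (Σ_l ‖P_l^{(1)} − b(P_l^{(1)})‖_∞^p)^{1/p}. -/
open scoped BigOperators

/-! Matching moves the persistence `y - x` of each point by at most twice the `∞`-distance of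
the matched points, so the Lipschitz bound on `f` controls each eminence termwise by
`2 |M| |K|` times that distance; homogeneity of the `p`-norm sums these bounds up. -/

theorem abs_sub_sub_sub_le_two_mul_max (x₁ y₁ x₂ y₂ : ℝ) :
    |(y₂ - x₂) - (y₁ - x₁)| ≤ 2 * max |x₁ - x₂| |y₁ - y₂| := by
  calc |(y₂ - x₂) - (y₁ - x₁)| = |(x₁ - x₂) - (y₁ - y₂)| := by ring_nf
    _ ≤ |x₁ - x₂| + |y₁ - y₂| := abs_sub _ _
    _ ≤ 2 * max |x₁ - x₂| |y₁ - y₂| := by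
        linarith [le_max_left |x₁ - x₂| |y₁ - y₂|, le_max_right |x₁ - x₂| |y₁ - y₂|]

theorem rpow_sum_abs_rpow_le_mul_of_abs_le {ι : Type*} (s : Finset ι) {p C : ℝ} (hp : 0 < p)
    (hC : 0 ≤ C) {u v : ι → ℝ} (hv : ∀ i ∈ s, 0 ≤ v i) (huv : ∀ i ∈ s, |u i| ≤ C * v i) :
    (∑ i ∈ s, |u i| ^ p) ^ (1 / p) ≤ C * (∑ i ∈ s, v i ^ p) ^ (1 / p) := by
  have hsum : ∑ i ∈ s, |u i| ^ p ≤ C ^ p * ∑ i ∈ s, v i ^ p := by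
    rw [Finset.mul_sum]
    refine Finset.sum_le_sum fun i hi => ?_
    rw [← Real.mul_rpow hC (hv i hi)]
    exact Real.rpow_le_rpow (abs_nonneg _) (huv i hi) hp.le
  have hv_pow : 0 ≤ ∑ i ∈ s, v i ^ p :=
    Finset.sum_nonneg fun i hi => Real.rpow_nonneg (hv i hi) _
  calc (∑ i ∈ s, |u i| ^ p) ^ (1 / p) ≤ (C ^ p * ∑ i ∈ s, v i ^ p) ^ (1 / p) :=
        Real.rpow_le_rpow (Finset.sum_nonneg fun i _ => by positivity) hsum (by positivity)
    _ = C * (∑ i ∈ s, v i ^ p) ^ (1 / p) := by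
        rw [Real.mul_rpow (by positivity) hv_pow, one_div, Real.rpow_rpow_inv hC hp.ne']

theorem stmt_8_general (p M K : ℝ) (hp : 1 ≤ p) :
    ∃ C : ℝ, 0 < C ∧ ∀ (k : ℕ) (x₁ y₁ x₂ y₂ : Fin k → ℝ) (f : ℝ → ℝ),
      (∀ a b, |f a - f b| ≤ K * |a - b|) →
      (∑ l, |M * f (y₂ l - x₂ l) - M * f (y₁ l - x₁ l)| ^ p) ^ (1 / p) ≤
        C * (∑ l, (max |x₁ l - x₂ l| |y₁ l - y₂ l|) ^ p) ^ (1 / p) := by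
  refine ⟨2 * |M| * |K| + 1, by positivity, fun k x₁ y₁ x₂ y₂ f hf => ?_⟩
  refine rpow_sum_abs_rpow_le_mul_of_abs_le _ (by linarith) (by positivity)
    (fun l _ => (abs_nonneg _).trans (le_max_left _ _)) fun l _ => ?_
  set m := max |x₁ l - x₂ l| |y₁ l - y₂ l|
  have hm : 0 ≤ m := (abs_nonneg _).trans (le_max_left _ _)
  have hf_abs : |f (y₂ l - x₂ l) - f (y₁ l - x₁ l)| ≤ |K| * (2 * m) :=
    (hf _ _).trans <| mul_le_mul (le_abs_self K)
      (abs_sub_sub_sub_le_two_mul_max _ _ _ _) (abs_nonneg _) (abs_nonneg K)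
  calc |M * f (y₂ l - x₂ l) - M * f (y₁ l - x₁ l)|
      = |M| * |f (y₂ l - x₂ l) - f (y₁ l - x₁ l)| := by rw [← mul_sub, abs_mul]
    _ ≤ |M| * (|K| * (2 * m)) := mul_le_mul_of_nonneg_left hf_abs (abs_nonneg M)
    _ ≤ (2 * |M| * |K| + 1) * m := by nlinarith [abs_nonneg M, abs_nonneg K]

/-- `p`-norm stability of eminence vectors: for every `1 ≤ p < ∞`, `M > 0`, `K ≥ 0`, there
is a constant `C > 0` (depending only on `p`, `M`, `K`) such that for all matched diagrams
and every `K`-Lipschitz `f`, `‖Z⁽²⁾ - Z⁽¹⁾‖_p ≤ C * (Σ_l ‖P_l⁽¹⁾ - b(P_l⁽¹⁾)‖_∞^p)^(1/p)`. -/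
theorem stmt_8 (p M K : ℝ) (hp : 1 ≤ p) (hM : 0 < M) (hK : 0 ≤ K) :
    ∃ C : ℝ, 0 < C ∧ ∀ (k : ℕ) (x₁ y₁ x₂ y₂ : Fin k → ℝ) (f : ℝ → ℝ),
      (∀ a b, |f a - f b| ≤ K * |a - b|) →
      (∑ l, |M * f (y₂ l - x₂ l) - M * f (y₁ l - x₁ l)| ^ p) ^ (1 / p) ≤
        C * (∑ l, (max |x₁ l - x₂ l| |y₁ l - y₂ l|) ^ p) ^ (1 / p) :=
  stmt_8_general p M K hp
end

section
/- Let A be a symmetric positive semidefinite n×n real matrix with spectral radius ρ(A) ≤ 1 and let c be in the column space of A. Define Z^{(N)} = (Σ_{i=0}^{N-1}(I − A)^i) c. Then Z^{(N)} converges as N → ∞ to the unique minimum-norm solution Z* of A Z = c, i.e., Z* = A⁺ c. -/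
open scoped BigOperators
open Matrix Filter

private lemma conj_mul_aux {n : ℕ} (V : Matrix (Fin n) (Fin n) ℝ)
    (hV' : star V * V = 1) (X Y : Matrix (Fin n) (Fin n) ℝ) :
    (V * X * star V) * (V * Y * star V) = V * (X * Y) * star V := by
  calc (V * X * star V) * (V * Y * star V)
      = V * X * ((star V * V) * (Y * star V)) := by simp only [mul_assoc]
    _ = V * (X * Y) * star V := by rw [hV', one_mul]; simp only [mul_assoc]

private lemma conj_diag_pow {n : ℕ} (V : Matrix (Fin n) (Fin n) ℝ)
    (hV : V * star V = 1) (hV' : star V * V = 1) (d : Fin n → ℝ) (N : ℕ) :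
    (V * Matrix.diagonal d * star V) ^ N
      = V * Matrix.diagonal (fun j => d j ^ N) * star V := by
  induction N with
  | zero =>
      have h1 : Matrix.diagonal (fun j : Fin n => d j ^ 0) = (1 : Matrix (Fin n) (Fin n) ℝ) := by
        simp [Matrix.diagonal_one]
      rw [pow_zero, h1, mul_one, hV]
  | succ N ih =>
      rw [pow_succ, ih, conj_mul_aux V hV', Matrix.diagonal_mul_diagonal]
      simp [pow_succ]

/-- Let `A` be a symmetric positive semidefinite matrix with spectral radius at most `1`
and `c` in the column space of `A`. Then `Z^(N) = (Σ_{i<N} (I - A)^i) c` converges as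
`N → ∞` to the unique minimum-Euclidean-norm solution `Z*` of `A Z = c` (i.e. `A⁺ c`). -/
theorem stmt_19 (n : ℕ) (A : Matrix (Fin n) (Fin n) ℝ)
    (hsymm : Aᵀ = A)
    (hpsd : ∀ x : Fin n → ℝ, 0 ≤ x ⬝ᵥ A.mulVec x)
    (hspec : ∀ (lam : ℝ) (x : Fin n → ℝ), x ≠ 0 → A.mulVec x = lam • x → |lam| ≤ 1)
    (c : Fin n → ℝ) (hc : ∃ w : Fin n → ℝ, A.mulVec w = c) :
    ∃ Zstar : Fin n → ℝ, A.mulVec Zstar = c ∧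
      (∀ w : Fin n → ℝ, A.mulVec w = c → w ≠ Zstar →
        Real.sqrt (∑ i, Zstar i ^ 2) < Real.sqrt (∑ i, w i ^ 2)) ∧
      Filter.Tendsto (fun N => (∑ i ∈ Finset.range N, (1 - A) ^ i).mulVec c)
        Filter.atTop (nhds Zstar) := by
  obtain ⟨w, hw⟩ := hc
  have hA : A.IsHermitian := by
    rw [Matrix.IsHermitian, Matrix.conjTranspose_eq_transpose_of_trivial]
    exact hsymm
  set V : Matrix (Fin n) (Fin n) ℝ := (hA.eigenvectorUnitary : Matrix (Fin n) (Fin n) ℝ)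
    with hVdef
  set μ : Fin n → ℝ := hA.eigenvalues with hμdef
  have hV : V * star V = 1 := Matrix.mem_unitaryGroup_iff.mp hA.eigenvectorUnitary.2
  have hV' : star V * V = 1 := Matrix.mem_unitaryGroup_iff'.mp hA.eigenvectorUnitary.2
  have hspecA : A = V * Matrix.diagonal μ * star V := by
    have := hA.spectral_theorem
    rwa [RCLike.ofReal_real_eq_id, Function.id_comp] at this
  -- eigenvalue bounds
  have hmu : ∀ j, 0 ≤ μ j ∧ μ j ≤ 1 := by
    intro j
    set v : Fin n → ℝ := ⇑(hA.eigenvectorBasis j) with hvdef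
    have hvne : v ≠ 0 := by
      intro h
      exact hA.eigenvectorBasis.orthonormal.ne_zero j (by ext i; exact congrFun h i)
    have hAv : A.mulVec v = μ j • v := hA.mulVec_eigenvectorBasis j
    have habs : |μ j| ≤ 1 := hspec (μ j) v hvne hAv
    have hvv : 0 < v ⬝ᵥ v := by
      rcases lt_or_eq_of_le (Finset.sum_nonneg fun i _ => mul_self_nonneg (v i)) with h | h
      · exact h
      · exact absurd (dotProduct_self_eq_zero.mp h.symm) hvne
    have h1 := hpsd v
    rw [hAv] at h1
    have h2 : v ⬝ᵥ (μ j • v) = μ j * (v ⬝ᵥ v) := by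
      simp [dotProduct_smul, smul_eq_mul, mul_comm]
    rw [h2] at h1
    constructor
    · nlinarith
    · exact (abs_le.mp habs).2
  -- the projection onto the kernel of A
  set e : Fin n → ℝ := fun j => if μ j = 0 then 1 else 0 with hedef
  set P : Matrix (Fin n) (Fin n) ℝ := V * Matrix.diagonal e * star V with hPdef
  set Zstar : Fin n → ℝ := w - P.mulVec w with hZdef
  have hAP : A * P = 0 := by
    rw [hspecA, hPdef, conj_mul_aux V hV', Matrix.diagonal_mul_diagonal]
    have : (fun j => μ j * e j) = fun _ => (0 : ℝ) := by
      funext j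
      by_cases h : μ j = 0 <;> simp [hedef, h]
    rw [this]
    simp
  have hAZ : A.mulVec Zstar = c := by
    rw [hZdef, Matrix.mulVec_sub, hw, Matrix.mulVec_mulVec, hAP, Matrix.zero_mulVec, sub_zero]
  -- P acts as identity on the kernel of A
  have hPker : ∀ k : Fin n → ℝ, A.mulVec k = 0 → P.mulVec k = k := by
    intro k hk
    set y : Fin n → ℝ := (star V).mulVec k with hydef
    have hDy : ∀ j, μ j * y j = 0 := by
      have h0 : (star V).mulVec (A.mulVec k) = 0 := by rw [hk]; simp
      rw [Matrix.mulVec_mulVec, hspecA] at h0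
      have : star V * (V * Matrix.diagonal μ * star V) = Matrix.diagonal μ * star V := by
        calc star V * (V * Matrix.diagonal μ * star V)
            = (star V * V) * (Matrix.diagonal μ * star V) := by simp only [mul_assoc]
          _ = Matrix.diagonal μ * star V := by rw [hV', one_mul]
      rw [this, ← Matrix.mulVec_mulVec] at h0
      intro j
      have := congrFun h0 j
      rwa [Matrix.mulVec_diagonal] at this
    have hEy : (Matrix.diagonal e).mulVec y = y := by
      funext j
      rw [Matrix.mulVec_diagonal]
      by_cases h : μ j = 0
      · simp [hedef, h]
      · have : y j = 0 := by
          rcases mul_eq_zero.mp (hDy j) with h' | h'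
          · exact absurd h' h
          · exact h'
        simp [hedef, h, this]
    calc P.mulVec k = V.mulVec ((Matrix.diagonal e).mulVec ((star V).mulVec k)) := by
          rw [Matrix.mulVec_mulVec, Matrix.mulVec_mulVec, hPdef]
      _ = V.mulVec y := by rw [← hydef, hEy]
      _ = (V * star V).mulVec k := by rw [hydef, Matrix.mulVec_mulVec]
      _ = k := by rw [hV, Matrix.one_mulVec]
  -- P is symmetric
  have hPsymm : Pᵀ = P := by
    have hstar : star P = P := by
      rw [hPdef]
      simp only [StarMul.star_mul, star_star]
      have : star (Matrix.diagonal e) = Matrix.diagonal e := by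
        rw [Matrix.star_eq_conjTranspose, Matrix.diagonal_conjTranspose]
        congr 1
      rw [this, mul_assoc]
    rw [← Matrix.conjTranspose_eq_transpose_of_trivial, ← Matrix.star_eq_conjTranspose, hstar]
  -- Zstar is orthogonal to the kernel of A
  have hdot : ∀ k : Fin n → ℝ, A.mulVec k = 0 → Zstar ⬝ᵥ k = 0 := by
    intro k hk
    have h1 : (P.mulVec w) ⬝ᵥ k = w ⬝ᵥ k := by
      calc (P.mulVec w) ⬝ᵥ k = k ⬝ᵥ (P.mulVec w) := dotProduct_comm _ _
        _ = (k ᵥ* P) ⬝ᵥ w := Matrix.dotProduct_mulVec _ _ _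
        _ = (Pᵀ.mulVec k) ⬝ᵥ w := by rw [Matrix.mulVec_transpose]
        _ = (P.mulVec k) ⬝ᵥ w := by rw [hPsymm]
        _ = k ⬝ᵥ w := by rw [hPker k hk]
        _ = w ⬝ᵥ k := dotProduct_comm _ _
    rw [hZdef, sub_dotProduct, h1, sub_self]
  refine ⟨Zstar, hAZ, ?_, ?_⟩
  · -- minimality
    intro w' hw' hne
    set k : Fin n → ℝ := w' - Zstar with hkdef
    have hkker : A.mulVec k = 0 := by
      rw [hkdef, Matrix.mulVec_sub, hw', hAZ, sub_self]
    have hk0 : k ≠ 0 := sub_ne_zero.mpr hne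
    have hzk : Zstar ⬝ᵥ k = 0 := hdot k hkker
    have hw'e : ∀ i, w' i = Zstar i + k i := by
      intro i; simp [hkdef]
    have hksum : 0 < ∑ i, k i ^ 2 := by
      obtain ⟨i, hi⟩ := Function.ne_iff.mp hk0
      exact Finset.sum_pos' (fun i _ => sq_nonneg _)
        ⟨i, Finset.mem_univ i, lt_of_le_of_ne (sq_nonneg _) (Ne.symm (pow_ne_zero 2 hi))⟩
    have hsum : ∑ i, w' i ^ 2 = ∑ i, Zstar i ^ 2 + 2 * (Zstar ⬝ᵥ k) + ∑ i, k i ^ 2 := by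
      have : ∀ i, w' i ^ 2 = Zstar i ^ 2 + 2 * (Zstar i * k i) + k i ^ 2 := by
        intro i; rw [hw'e i]; ring
      rw [Finset.sum_congr rfl fun i _ => this i]
      rw [Finset.sum_add_distrib, Finset.sum_add_distrib, ← Finset.mul_sum]
      rfl
    apply Real.sqrt_lt_sqrt (Finset.sum_nonneg fun i _ => sq_nonneg _)
    rw [hsum, hzk]
    linarith
  · -- convergence
    have h1A : (1 : Matrix (Fin n) (Fin n) ℝ) - A
        = V * Matrix.diagonal (fun j => 1 - μ j) * star V := by
      have hd : Matrix.diagonal (fun j : Fin n => (1 : ℝ) - μ j)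
          = 1 - Matrix.diagonal μ := by
        rw [← Matrix.diagonal_one, Matrix.diagonal_sub]
      rw [hd, Matrix.mul_sub, Matrix.mul_one, Matrix.sub_mul, hV, ← hspecA]
    have hBN : ∀ N, ((1 : Matrix (Fin n) (Fin n) ℝ) - A) ^ N
        = V * Matrix.diagonal (fun j => (1 - μ j) ^ N) * star V := by
      intro N
      rw [h1A, conj_diag_pow V hV hV']
    have hgeom : ∀ N, (∑ i ∈ Finset.range N, ((1 : Matrix (Fin n) (Fin n) ℝ) - A) ^ i).mulVec c
        = w - (((1 : Matrix (Fin n) (Fin n) ℝ) - A) ^ N).mulVec w := by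
      intro N
      have h := geom_sum_mul ((1 : Matrix (Fin n) (Fin n) ℝ) - A) N
      have h2 : ((1 : Matrix (Fin n) (Fin n) ℝ) - A) - 1 = -A := by abel
      rw [h2, mul_neg] at h
      have h3 : (∑ i ∈ Finset.range N, ((1 : Matrix (Fin n) (Fin n) ℝ) - A) ^ i) * A
          = 1 - ((1 : Matrix (Fin n) (Fin n) ℝ) - A) ^ N := by
        rw [neg_eq_iff_eq_neg.mp h, neg_sub]
      calc (∑ i ∈ Finset.range N, ((1 : Matrix (Fin n) (Fin n) ℝ) - A) ^ i).mulVec c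
          = (∑ i ∈ Finset.range N, ((1 : Matrix (Fin n) (Fin n) ℝ) - A) ^ i).mulVec
              (A.mulVec w) := by rw [hw]
        _ = ((∑ i ∈ Finset.range N, ((1 : Matrix (Fin n) (Fin n) ℝ) - A) ^ i) * A).mulVec w := by
              rw [Matrix.mulVec_mulVec]
        _ = ((1 : Matrix (Fin n) (Fin n) ℝ) - ((1 : Matrix (Fin n) (Fin n) ℝ) - A) ^ N).mulVec
              w := by rw [h3]
        _ = w - (((1 : Matrix (Fin n) (Fin n) ℝ) - A) ^ N).mulVec w := by
              rw [Matrix.sub_mulVec, Matrix.one_mulVec]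
    -- convergence of the diagonal powers
    have hdiag : Tendsto (fun N => Matrix.diagonal (fun j => (1 - μ j) ^ N)) atTop
        (nhds (Matrix.diagonal e)) := by
      refine tendsto_pi_nhds.mpr ?_
      intro i
      rw [tendsto_pi_nhds]
      intro j
      by_cases hij : i = j
      · subst hij
        simp only [Matrix.diagonal_apply_eq]
        by_cases h0 : μ i = 0
        · simp only [h0, sub_zero, one_pow, hedef, if_pos h0]
          exact tendsto_const_nhds
        · have h01 : 0 < μ i := lt_of_le_of_ne (hmu i).1 (Ne.symm h0)
          have habs : |1 - μ i| < 1 := by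
            rw [abs_lt]
            constructor <;> [linarith [(hmu i).2]; linarith]
          simp only [hedef, if_neg h0]
          exact tendsto_pow_atTop_nhds_zero_of_abs_lt_one habs
      · simp only [Matrix.diagonal_apply_ne _ hij]
        exact tendsto_const_nhds
    have hcont : Continuous fun M : Matrix (Fin n) (Fin n) ℝ => w - (V * M * star V).mulVec w := by
      apply continuous_const.sub
      exact (((continuous_const.matrix_mul continuous_id).matrix_mul
        continuous_const).matrix_mulVec continuous_const)
    have hlim : Tendsto (fun N => w - (V * Matrix.diagonal (fun j => (1 - μ j) ^ N) * star V).mulVec w)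
        atTop (nhds (w - (V * Matrix.diagonal e * star V).mulVec w)) :=
      (hcont.tendsto (Matrix.diagonal e)).comp hdiag
    have heq : (fun N => (∑ i ∈ Finset.range N, ((1 : Matrix (Fin n) (Fin n) ℝ) - A) ^ i).mulVec c)
        = fun N => w - (V * Matrix.diagonal (fun j => (1 - μ j) ^ N) * star V).mulVec w := by
      funext N
      rw [hgeom N, hBN N]
    rw [heq]
    exact hlim
end
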